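/- arXiv:1707.01354 — 2 statements merged into one kernel-verified Lean document; each statement's English description precedes it below -/
import Mathlib

section
/- Combinatorial Nullstellensatz for consecutive derivatives: let J ⊆ ℕᵐ be a finite decreasing set, S₁,...,Sₘ ⊆ F finite nonempty sets, S = S₁×···×Sₘ, and F ∈ F[x₁,...,xₘ] a nonzero polynomial with leading monomial xⁱ (for some monomial ordering). If i ∈ J_S = {i ∈ ℕᵐ : i ⋡ (r₁#S₁,...,rₘ#Sₘ) for all r ∉ J}, then there exist s ∈ S and j ∈ J such that F^(j)(s) ≠ 0. -/
open MvPolynomial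

/-- The `i`-th Hasse derivative of a multivariate polynomial, characterized by
`F(x+z) = Σ_i F^(i)(x) z^i`. -/
noncomputable def mvHasseDeriv {K : Type*} [CommSemiring K] {σ : Type*}
    (i : σ →₀ ℕ) (F : MvPolynomial σ K) : MvPolynomial σ K :=
  (AddMonoidAlgebra.coeff F).sum fun k c => monomial (k - i) ((i.prod fun j ij => (k j).choose ij : ℕ) * c)


/-- `i` is the leading monomial (exponent) of `F` with respect to the monomial order `ord`. -/
def IsLeadingMonomial {K : Type*} [CommSemiring K] {m : ℕ} (ord : MonomialOrder (Fin m))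
    (F : MvPolynomial (Fin m) K) (i : Fin m →₀ ℕ) : Prop :=
  i ∈ F.support ∧ ∀ k ∈ F.support, ord.toSyn k ≤ ord.toSyn i

/-- The footprint of an ideal: exponents of monomials not in the ideal generated by the
leading monomials of the (nonzero) elements of the ideal. -/
def footprint {K : Type*} [Field K] {m : ℕ} (ord : MonomialOrder (Fin m))
    (Kid : Ideal (MvPolynomial (Fin m) K)) : Set (Fin m →₀ ℕ) :=
  {i | (MvPolynomial.monomial i (1 : K)) ∉
    Ideal.span {g | ∃ F ∈ Kid, ∃ l, IsLeadingMonomial ord F l ∧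
      g = MvPolynomial.monomial l (1 : K)}}

/-!
Expand `F = ∑ r, f r * G ^ r`, where `G ^ r = ∏ j, g j ^ r j` with `g j = ∏ a ∈ S j, (X j - a)`
and every `f r` has degree `< #(S j)` in each `X j`. Suppose all `F^(b)`, `b ∈ J`, vanish on
the grid `S`. For `s` in the grid, the shift `X ↦ X + s` turns `G ^ r'` into `X ^ r'` times a
polynomial with nonzero constant term; so for `r ∈ J` minimal with `f r ≠ 0`, the `r`-th Taylor
coefficient of `F` at `s`, which is `F^(r)(s) = 0`, equals `f r (s)` times a nonzero constant.
Then `f r` vanishes on the grid and is zero by Alon's lemma: `f` is supported outside `J`. The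
terms `f r * G ^ r` have pairwise distinct leading exponents `lm (f r) + (r j * #(S j))_j`, so
the leading exponent `i` of `F` is one of them, and `r j * #(S j) ≤ i j` for some `r ∉ J`.
-/

open Finset

theorem MonomialOrder.exists_degree_sum_eq_degree {σ R ι : Type*} [CommSemiring R]
    (m : MonomialOrder σ) {s : Finset ι} (hs : s.Nonempty) {t : ι → MvPolynomial σ R}
    (ht : ∀ i ∈ s, t i ≠ 0) (hinj : Set.InjOn (fun i => m.degree (t i)) s) :
    ∃ i ∈ s, m.degree (∑ k ∈ s, t k) = m.degree (t i) := by
  obtain ⟨i, hi, hmax⟩ := s.exists_max_image (fun k => m.toSyn (m.degree (t k))) hs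
  refine ⟨i, hi, m.toSyn.injective (le_antisymm (m.degree_sum_le.trans (Finset.sup_le hmax)) ?_)⟩
  apply m.le_degree
  rw [MvPolynomial.mem_support_iff, MvPolynomial.coeff_sum, sum_eq_single i]
  · exact m.coeff_degree_ne_zero_iff.mpr (ht i hi)
  · refine fun k hk hki => m.coeff_eq_zero_of_lt ((hmax k hk).lt_of_ne fun h => hki ?_)
    exact hinj hk hi (m.toSyn.injective h)
  · exact fun h => absurd hi h

namespace IsLeadingMonomial

variable {K : Type*} [CommSemiring K] {m : ℕ} {ord : MonomialOrder (Fin m)}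
  {F : MvPolynomial (Fin m) K} {i : Fin m →₀ ℕ}

theorem ne_zero (h : IsLeadingMonomial ord F i) : F ≠ 0 :=
  MvPolynomial.support_nonempty.mp ⟨i, h.1⟩

theorem degree_eq (h : IsLeadingMonomial ord F i) : ord.degree F = i :=
  ord.toSyn.injective <| le_antisymm (h.2 _ (ord.degree_mem_support h.ne_zero)) (ord.le_degree h.1)

end IsLeadingMonomial

namespace MvPolynomial

variable {K σ : Type*}

section TaylorShift

variable [CommSemiring K]

theorem mvHasseDeriv_add (b : σ →₀ ℕ) (F G : MvPolynomial σ K) :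
    mvHasseDeriv b (F + G) = mvHasseDeriv b F + mvHasseDeriv b G := by
  classical
  unfold mvHasseDeriv
  rw [AddMonoidAlgebra.coeff_add]
  apply Finsupp.sum_add_index' <;> intro k <;> simp [mul_add]

theorem mvHasseDeriv_monomial (b k : σ →₀ ℕ) (c : K) :
    mvHasseDeriv b (monomial k c) =
      monomial (k - b) ((b.prod fun j bj => (k j).choose bj : ℕ) * c) := by
  classical
  unfold mvHasseDeriv
  rw [← single_eq_monomial, AddMonoidAlgebra.coeff_single, Finsupp.sum_single_index]
  simp

theorem coeff_prod_X_add_C_pow [Fintype σ] (s : σ → K) (k b : σ →₀ ℕ) :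
    coeff b (∏ j, (X j + C (s j)) ^ k j) = ∏ j, ((k j).choose (b j) * s j ^ (k j - b j)) := by
  classical
  have hexp : ∀ j, (X j + C (s j)) ^ k j = ∑ t ∈ range (k j + 1),
      monomial (Finsupp.single j t) ((k j).choose t * s j ^ (k j - t)) := fun j => by
    rw [add_pow]
    refine sum_congr rfl fun t _ => ?_
    rw [X_pow_eq_monomial, ← C_pow, ← map_natCast C, mul_assoc, ← C_mul, mul_comm,
      C_mul_monomial, mul_one, mul_comm (s j ^ _)]
  simp_rw [hexp, prod_univ_sum, ← monomial_sum_prod, coeff_sum, coeff_monomial]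
  rw [sum_eq_single ⇑b]
  · rw [if_pos (Finsupp.univ_sum_single b)]
  · intro t _ htb
    rw [if_neg]
    intro h
    apply htb
    ext j
    simpa [Finsupp.single_apply] using DFunLike.congr_fun h j
  · intro hb
    rw [if_pos (Finsupp.univ_sum_single b)]
    simp only [Fintype.mem_piFinset, mem_range, not_forall, not_lt] at hb
    obtain ⟨j, hj⟩ := hb
    exact prod_eq_zero (mem_univ j) (by simp [Nat.choose_eq_zero_of_lt (by omega : k j < b j)])

noncomputable def taylorShift (s : σ → K) : MvPolynomial σ K →ₐ[K] MvPolynomial σ K :=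
  aeval fun j => X j + C (s j)

theorem eval_mvHasseDeriv [Fintype σ] (s : σ → K) (b : σ →₀ ℕ) (G : MvPolynomial σ K) :
    eval s (mvHasseDeriv b G) = coeff b (taylorShift s G) := by
  induction G using MvPolynomial.induction_on' with
  | add p q hp hq => rw [mvHasseDeriv_add, map_add, map_add, coeff_add, hp, hq]
  | monomial k c =>
    rw [mvHasseDeriv_monomial, eval_monomial, taylorShift, aeval_monomial, algebraMap_eq,
      coeff_C_mul, Finsupp.prod_fintype k _ (fun _ => pow_zero _), coeff_prod_X_add_C_pow,
      Finsupp.prod_fintype (k - b) _ (fun _ => pow_zero _),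
      Finsupp.prod_fintype b _ (fun _ => Nat.choose_zero_right _), prod_mul_distrib]
    push_cast
    simp only [Pi.sub_apply]
    ring

theorem constantCoeff_taylorShift (s : σ → K) (P : MvPolynomial σ K) :
    constantCoeff (taylorShift s P) = eval s P := by
  have h : constantCoeff.comp (taylorShift s).toRingHom = eval s := by
    apply ringHom_ext <;> intro a <;> simp [taylorShift]
  exact RingHom.congr_fun h P

end TaylorShift

section Grid

variable [CommRing K] (S : σ → Finset K)

noncomputable def gridPoly (j : σ) : MvPolynomial σ K := ∏ a ∈ S j, (X j - C a)

noncomputable def gridPow (r : σ →₀ ℕ) : MvPolynomial σ K := r.prod fun j e => gridPoly S j ^ e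

noncomputable def gridExpansion (f : (σ →₀ ℕ) →₀ MvPolynomial σ K) : MvPolynomial σ K :=
  f.sum fun r p => p * gridPow S r

theorem monic_gridPoly (ord : MonomialOrder σ) (j : σ) : ord.Monic (gridPoly S j) :=
  MonomialOrder.Monic.prod fun a _ => ord.monic_X_sub_C j a

theorem monic_gridPow (ord : MonomialOrder σ) (r : σ →₀ ℕ) : ord.Monic (gridPow S r) :=
  MonomialOrder.Monic.prod fun j _ => (monic_gridPoly S ord j).pow

theorem gridExpansion_add_single (f : (σ →₀ ℕ) →₀ MvPolynomial σ K) (r : σ →₀ ℕ)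
    (p : MvPolynomial σ K) :
    gridExpansion S (f + Finsupp.single r p) = gridExpansion S f + p * gridPow S r := by
  rw [gridExpansion, Finsupp.sum_add_index' (fun _ => zero_mul _) (fun _ _ _ => add_mul _ _ _),
    Finsupp.sum_single_index (zero_mul _), gridExpansion]

variable {S}

theorem degreeOf_add_single_lt {f : (σ →₀ ℕ) →₀ MvPolynomial σ K}
    (hf : ∀ r j, degreeOf j (f r) < #(S j)) {r : σ →₀ ℕ} {p : MvPolynomial σ K}
    (hp : ∀ j, degreeOf j p < #(S j)) (r' : σ →₀ ℕ) (j : σ) :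
    degreeOf j ((f + Finsupp.single r p) r') < #(S j) := by
  classical
  refine (degreeOf_add_le j _ _).trans_lt (max_lt (hf r' j) ?_)
  rw [Finsupp.single_apply]
  split_ifs
  · exact hp j
  · exact (degreeOf_zero j).trans_lt ((hf r' j).trans_le' (Nat.zero_le _))

variable [IsDomain K]

theorem degree_gridPoly (ord : MonomialOrder σ) (j : σ) :
    ord.degree (gridPoly S j) = Finsupp.single j #(S j) := by
  rw [gridPoly, ord.degree_prod fun a _ => (ord.monic_X_sub_C j a).ne_zero]
  simp [ord.degree_X_sub_C]

theorem degree_gridPow_apply (ord : MonomialOrder σ) (r : σ →₀ ℕ) (j : σ) :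
    ord.degree (gridPow S r) j = r j * #(S j) := by
  classical
  rw [gridPow, Finsupp.prod, ord.degree_prod fun i _ => (monic_gridPoly S ord i).pow.ne_zero]
  simp only [ord.degree_pow, degree_gridPoly, Finsupp.finsetSum_apply, Finsupp.smul_apply,
    Finsupp.single_apply, smul_eq_mul, mul_ite, mul_zero]
  rw [sum_ite_eq']
  split_ifs with h
  · rfl
  · simp [Finsupp.notMem_support_iff.mp h]

theorem exists_gridExpansion [Finite σ] (hS : ∀ j, (S j).Nonempty) (F : MvPolynomial σ K) :
    ∃ f : (σ →₀ ℕ) →₀ MvPolynomial σ K,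
      (∀ r j, degreeOf j (f r) < #(S j)) ∧ F = gridExpansion S f := by
  classical
  let _ : LinearOrder σ := WellOrderingRel.isWellOrder.linearOrder
  let ord : MonomialOrder σ := .degLex
  have hcard : ∀ j, 0 < #(S j) := fun j => card_pos.mpr (hS j)
  induction hd : ord.toSyn (ord.degree F) using WellFoundedLT.induction generalizing F with
  | _ d ih =>
  by_cases h0 : ord.degree F = 0
  · refine ⟨Finsupp.single 0 F, fun r j => ?_, ?_⟩
    · rw [Finsupp.single_apply]
      split_ifs
      · rw [ord.eq_C_of_degree_eq_zero h0, degreeOf_C]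
        exact hcard j
      · exact (degreeOf_zero j).trans_lt (hcard j)
    · rw [gridExpansion, Finsupp.sum_single_index (zero_mul _), gridPow, Finsupp.prod_zero_index,
        mul_one]
  -- `F` and `X ^ (d % #S) * gridPow S (d / #S)` (coordinatewise) share the leading exponent `d`
  let r : σ →₀ ℕ := Finsupp.equivFunOnFinite.symm fun j => ord.degree F j / #(S j)
  have hb : IsUnit (ord.leadingCoeff (gridPow S r)) :=
    (monic_gridPow S ord r).leadingCoeff_eq_one ▸ isUnit_one
  have hle : ord.degree (gridPow S r) ≤ ord.degree F := fun j => by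
    rw [degree_gridPow_apply]
    exact Nat.div_mul_le_self _ _
  obtain ⟨f, hf, hF⟩ := ih _ (hd ▸ ord.degree_reduce_lt hb hle h0) (ord.reduce hb F) rfl
  refine ⟨f + Finsupp.single r (monomial (ord.degree F - ord.degree (gridPow S r))
    (hb.unit⁻¹ * ord.leadingCoeff F)), degreeOf_add_single_lt hf fun j => ?_, ?_⟩
  · refine (degreeOf_lt_iff (hcard j)).mpr fun q hq => ?_
    rw [mem_singleton.mp (support_monomial_subset hq), Finsupp.tsub_apply,
      degree_gridPow_apply]
    have := Nat.mod_lt (ord.degree F j) (hcard j)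
    have := Nat.mod_add_div' (ord.degree F j) #(S j)
    simp only [r, Finsupp.coe_equivFunOnFinite_symm]
    omega
  · rw [gridExpansion_add_single, ← hF, MonomialOrder.reduce, sub_add_cancel]

theorem exists_degree_gridPow_le_degree_gridExpansion (ord : MonomialOrder σ)
    (hS : ∀ j, (S j).Nonempty) {f : (σ →₀ ℕ) →₀ MvPolynomial σ K}
    (hf : ∀ r j, degreeOf j (f r) < #(S j)) (hF : gridExpansion S f ≠ 0) :
    ∃ r ∈ f.support, ord.degree (gridPow S r) ≤ ord.degree (gridExpansion S f) := by
  have hterm : ∀ r ∈ f.support, f r * gridPow S r ≠ 0 := fun r hr =>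
    mul_ne_zero (Finsupp.mem_support_iff.mp hr) (monic_gridPow S ord r).ne_zero
  have hdeg : ∀ r ∈ f.support,
      ord.degree (f r * gridPow S r) = ord.degree (f r) + ord.degree (gridPow S r) := fun r hr =>
    ord.degree_mul (Finsupp.mem_support_iff.mp hr) (monic_gridPow S ord r).ne_zero
  have hdiv : ∀ r ∈ f.support, ∀ j, ord.degree (f r * gridPow S r) j / #(S j) = r j := by
    intro r hr j
    have hlt : ord.degree (f r) j < #(S j) := (monomial_le_degreeOf j
      (ord.degree_mem_support (Finsupp.mem_support_iff.mp hr))).trans_lt (hf r j)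
    rw [hdeg r hr, Finsupp.add_apply, degree_gridPow_apply, Nat.add_mul_div_right _ _
      (card_pos.mpr (hS j)), Nat.div_eq_of_lt hlt, zero_add]
  have hsupp : f.support.Nonempty := by
    by_contra! h
    exact hF (by rw [gridExpansion, Finsupp.sum, h, sum_empty])
  obtain ⟨r, hr, hrdeg⟩ := ord.exists_degree_sum_eq_degree hsupp hterm fun r hr r' hr' h =>
    Finsupp.ext fun j => by
      rw [← hdiv r hr, ← hdiv r' hr', show ord.degree _ = ord.degree _ from h]
  refine ⟨r, hr, ?_⟩
  rw [gridExpansion, Finsupp.sum, hrdeg, hdeg r hr]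
  exact le_add_self

theorem taylorShift_gridPoly {s : σ → K} {j : σ} (hs : s j ∈ S j) :
    ∃ H, taylorShift s (gridPoly S j) = X j * H ∧ constantCoeff H ≠ 0 := by
  classical
  refine ⟨∏ a ∈ (S j).erase (s j), (X j + C (s j - a)), ?_, ?_⟩
  · rw [gridPoly, map_prod, ← mul_prod_erase _ _ hs]
    simp [taylorShift, sub_eq_add_neg, add_assoc]
  · simp only [map_prod, map_add, constantCoeff_X, constantCoeff_C, zero_add]
    exact prod_ne_zero_iff.mpr fun a ha => sub_ne_zero.mpr (ne_of_mem_erase ha).symm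

theorem taylorShift_gridPow {s : σ → K} (hs : ∀ j, s j ∈ S j) (r : σ →₀ ℕ) :
    ∃ H, taylorShift s (gridPow S r) = monomial r 1 * H ∧ constantCoeff H ≠ 0 := by
  choose H hH hH0 using fun j => taylorShift_gridPoly (hs j)
  refine ⟨r.prod fun j e => H j ^ e, ?_, ?_⟩
  · simp only [gridPow, map_finsuppProd, map_pow, hH, mul_pow, Finsupp.prod_mul, monomial_eq,
      C_1, one_mul]
  · rw [Finsupp.prod, map_prod]
    exact prod_ne_zero_iff.mpr fun j _ => by rw [map_pow]; exact pow_ne_zero _ (hH0 j)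

theorem coeff_taylorShift_mul_gridPow_of_not_le {s : σ → K} (hs : ∀ j, s j ∈ S j)
    {r r' : σ →₀ ℕ} (h : ¬ r' ≤ r) (p : MvPolynomial σ K) :
    coeff r (taylorShift s (p * gridPow S r')) = 0 := by
  obtain ⟨H, hH, -⟩ := taylorShift_gridPow hs r'
  rw [map_mul, hH, mul_left_comm, coeff_monomial_mul', if_neg h]

theorem coeff_taylorShift_mul_gridPow_self {s : σ → K} (hs : ∀ j, s j ∈ S j)
    (r : σ →₀ ℕ) (p : MvPolynomial σ K) :
    ∃ c ≠ 0, coeff r (taylorShift s (p * gridPow S r)) = eval s p * c := by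
  obtain ⟨H, hH, hH0⟩ := taylorShift_gridPow hs r
  refine ⟨constantCoeff H, hH0, ?_⟩
  rw [map_mul, hH, mul_left_comm, coeff_monomial_mul', if_pos le_rfl, one_mul, tsub_self,
    ← constantCoeff_eq, map_mul, constantCoeff_taylorShift]

theorem eq_zero_of_forall_eval_mvHasseDeriv_gridExpansion_eq_zero [Fintype σ]
    {J : Set (σ →₀ ℕ)} (hJ : IsLowerSet J) {f : (σ →₀ ℕ) →₀ MvPolynomial σ K}
    (hf : ∀ r j, degreeOf j (f r) < #(S j))
    (hvan : ∀ s : σ → K, (∀ j, s j ∈ S j) → ∀ b ∈ J,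
      eval s (mvHasseDeriv b (gridExpansion S f)) = 0)
    {r : σ →₀ ℕ} (hr : r ∈ J) : f r = 0 := by
  by_contra hr0
  obtain ⟨r, ⟨hrJ, hr0⟩, hmin⟩ :=
    exists_minimal_of_wellFoundedLT (fun r => r ∈ J ∧ f r ≠ 0) ⟨r, hr, hr0⟩
  refine hr0 (eq_zero_of_eval_zero_at_prod_finset _ S (hf r) fun s hs => ?_)
  obtain ⟨c, hc, hcoeff⟩ := coeff_taylorShift_mul_gridPow_self hs r (f r)
  -- by minimality of `r`, only the term of index `r` reaches the `r`-th Taylor coefficient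
  have hsingle : coeff r (taylorShift s (gridExpansion S f)) =
      coeff r (taylorShift s (f r * gridPow S r)) := by
    rw [gridExpansion, Finsupp.sum, map_sum, coeff_sum]
    refine sum_eq_single r (fun r' hr' hne => ?_)
      fun h => absurd (Finsupp.mem_support_iff.mpr hr0) h
    refine coeff_taylorShift_mul_gridPow_of_not_le hs (fun hle => hne ?_) _
    exact le_antisymm hle (hmin ⟨hJ hle hrJ, Finsupp.mem_support_iff.mp hr'⟩ hle)
  have := hvan s hs r hrJ
  rw [eval_mvHasseDeriv, hsingle, hcoeff] at this
  exact (mul_eq_zero.mp this).resolve_right hc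

end Grid

end MvPolynomial

theorem comb_nullstellensatz_consecutive_general {K : Type*} [Field K] {m : ℕ}
    (ord : MonomialOrder (Fin m)) (J : Finset (Fin m →₀ ℕ))
    (hJ : ∀ i ∈ J, ∀ k : Fin m →₀ ℕ, k ≤ i → k ∈ J)
    (S : Fin m → Finset K) (hS : ∀ j, (S j).Nonempty)
    (F : MvPolynomial (Fin m) K) (i : Fin m →₀ ℕ)
    (hlm : IsLeadingMonomial ord F i)
    (hi : ∀ r : Fin m →₀ ℕ, r ∉ J → ¬ (∀ j, r j * (S j).card ≤ i j)) :
    ∃ s : Fin m → K, (∀ j, s j ∈ S j) ∧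
      ∃ jj ∈ J, MvPolynomial.eval s (mvHasseDeriv jj F) ≠ 0 := by
  by_contra! hvan
  obtain ⟨f, hf, rfl⟩ := exists_gridExpansion hS F
  have hJf : ∀ r ∈ J, f r = 0 := fun r hr =>
    eq_zero_of_forall_eval_mvHasseDeriv_gridExpansion_eq_zero (J := J)
      (fun a b hba ha => hJ a ha b hba) hf hvan hr
  obtain ⟨r, hr, hle⟩ := exists_degree_gridPow_le_degree_gridExpansion ord hS hf hlm.ne_zero
  rw [hlm.degree_eq] at hle
  refine hi r (fun hrJ => Finsupp.mem_support_iff.mp hr (hJf r hrJ)) fun j => ?_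
  exact (degree_gridPow_apply ord r j).ge.trans (hle j)

/-- Combinatorial Nullstellensatz for consecutive derivatives. -/
theorem comb_nullstellensatz_consecutive {K : Type*} [Field K] {m : ℕ}
    (ord : MonomialOrder (Fin m)) (J : Finset (Fin m →₀ ℕ))
    (hJ : ∀ i ∈ J, ∀ k : Fin m →₀ ℕ, k ≤ i → k ∈ J)
    (S : Fin m → Finset K) (hS : ∀ j, (S j).Nonempty)
    (F : MvPolynomial (Fin m) K) (hF : F ≠ 0) (i : Fin m →₀ ℕ)
    (hlm : IsLeadingMonomial ord F i)
    (hi : ∀ r : Fin m →₀ ℕ, r ∉ J → ¬ (∀ j, r j * (S j).card ≤ i j)) :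
    ∃ s : Fin m → K, (∀ j, s j ∈ S j) ∧
      ∃ jj ∈ J, MvPolynomial.eval s (mvHasseDeriv jj F) ≠ 0 :=
  comb_nullstellensatz_consecutive_general ord J hJ S hS F i hlm hi
end

section
/- Decomposition for coordinatewise multiplicities: let (r₁,...,rₘ) ∈ ℕ₊ᵐ and suppose F ∈ F[x₁,...,xₘ] satisfies F^(j)(s) = 0 for all s ∈ S = S₁×···×Sₘ and all multiindices j = (j₁,...,jₘ) with j_k < r_k for all k. Then there exist H₁,...,Hₘ ∈ F[x₁,...,xₘ] with deg H_j + r_j·#S_j ≤ deg F, such that F = Σ_{j=1}^m H_j(x)·G_j(x_j)^{r_j}, where G_j(x_j) = ∏_{s∈S_j}(x_j−s). -/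
open MvPolynomial

/-
Dividing `F` by the polynomials `G_j(x_j)^{r_j}`, which are monic for the degree-lexicographic
order, gives `F = Σ H_j G_j^{r_j} + G` with the required degree bounds and with every monomial of
`G` of degree `< r_j #S_j` in `x_j`. By Taylor's formula the hypothesis says that `F` lies, for
every grid point `s`, in the ideal generated by the `(x_k - s_k)^{r_k}`; so does every
`H_j G_j^{r_j}`, hence so does `G`. Such a `G` vanishes: viewed as a polynomial in `x_0` over the
quotient of `K[x_1, …, x_m]` by the ideal at `(s_1, …, s_m)`, it is divisible by `(x_0 - a)^{r_0}`
for all `a ∈ S_0`, hence by a monic polynomial of larger degree, and induction on the number of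
variables applies to its coefficients.
-/

open scoped Finset

namespace Polynomial

theorem eq_zero_of_forall_X_sub_C_pow_dvd {B ι : Type*} [CommRing B] {t : Finset ι} {v : ι → B}
    (hv : (t : Set ι).Pairwise fun a b => IsUnit (v a - v b)) {r : ℕ} {p : B[X]}
    (hdeg : p.degree < ↑(r * #t)) (hdvd : ∀ a ∈ t, (X - C (v a)) ^ r ∣ p) : p = 0 := by
  nontriviality B
  have hprod : ∏ a ∈ t, (X - C (v a)) ^ r ∣ p := Finset.prod_dvd_of_coprime
    (fun a ha b hb hab => (isCoprime_X_sub_C_of_isUnit_sub (hv ha hb hab)).pow) hdvd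
  have hmonic : (∏ a ∈ t, (X - C (v a)) ^ r).Monic :=
    monic_prod_of_monic _ _ fun a _ => (monic_X_sub_C _).pow r
  have hnatDeg : (∏ a ∈ t, (X - C (v a)) ^ r).natDegree = r * #t := by
    rw [natDegree_prod_of_monic _ _ fun a _ => (monic_X_sub_C (v a)).pow r,
      Finset.sum_congr rfl fun a _ => by rw [(monic_X_sub_C (v a)).natDegree_pow,
        natDegree_X_sub_C, mul_one], Finset.sum_const, smul_eq_mul, mul_comm]
  by_contra hp
  refine hmonic.not_dvd_of_degree_lt hp ?_ hprod
  rwa [degree_eq_natDegree hmonic.ne_zero, hnatDeg]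

end Polynomial

namespace MvPolynomial

variable {σ R : Type*}

section CommSemiring

variable [CommSemiring R]

noncomputable def taylor (s : σ → R) : MvPolynomial σ R →ₐ[R] MvPolynomial σ R :=
  aeval fun k => X k + C (s k)

theorem prod_X_pow_eq_monomial_equivFunOnFinite [Fintype σ] (x : σ → ℕ) :
    ∏ k, (X k ^ x k : MvPolynomial σ R) = monomial (Finsupp.equivFunOnFinite.symm x) 1 := by
  rw [monomial_eq, C_1, one_mul, Finsupp.prod_fintype _ _ (by simp)]
  rfl

theorem coeff_taylor_monomial [Fintype σ] [DecidableEq σ] (s : σ → R) (μ i : σ →₀ ℕ) (c : R) :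
    coeff i (taylor s (monomial μ c)) = c * ∏ k, (μ k).choose (i k) * s k ^ (μ k - i k) := by
  have hfactor (k : σ) : (X k + C (s k)) ^ μ k = ∑ t ∈ Finset.range (μ k + 1),
      C ((μ k).choose t * s k ^ (μ k - t)) * X k ^ t := by
    rw [add_pow]
    refine Finset.sum_congr rfl fun t _ => ?_
    rw [map_mul, map_pow, map_natCast]
    ring
  rw [taylor, aeval_monomial, Finsupp.prod_fintype _ _ (by simp), Finset.prod_congr rfl
    fun k _ => hfactor k, Finset.prod_univ_sum, algebraMap_eq, Finset.mul_sum, coeff_sum]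
  simp only [Finset.prod_mul_distrib, ← map_prod, prod_X_pow_eq_monomial_equivFunOnFinite,
    ← mul_assoc, ← map_mul, coeff_C_mul, coeff_monomial, Equiv.symm_apply_eq, mul_ite, mul_one,
    mul_zero]
  rw [Finset.sum_ite_eq']
  split_ifs with hi
  · rfl
  · obtain ⟨k, hk⟩ : ∃ k, μ k < i k := by
      simpa [Fintype.mem_piFinset, Nat.lt_succ_iff] using hi
    rw [Finset.prod_eq_zero (Finset.mem_univ k) (by rw [Nat.choose_eq_zero_of_lt hk]; simp),
      mul_zero, zero_mul]

theorem coeff_taylor [Fintype σ] (s : σ → R) (i : σ →₀ ℕ) (F : MvPolynomial σ R) :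
    coeff i (taylor s F) = eval s (mvHasseDeriv i F) := by
  classical
  conv_lhs => rw [F.as_sum]
  rw [mvHasseDeriv, sum_def, map_sum, map_sum, coeff_sum]
  refine Finset.sum_congr rfl fun μ _ => ?_
  rw [coeff_taylor_monomial, eval_monomial, Finsupp.prod_fintype _ _ (by simp),
    Finsupp.prod_fintype (μ - i) _ (by simp), Nat.cast_prod, Finset.prod_mul_distrib]
  simp only [Finsupp.tsub_apply]
  ring

end CommSemiring

variable [CommRing R]

theorem taylor_neg_taylor (s : σ → R) (F : MvPolynomial σ R) : taylor (-s) (taylor s F) = F := by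
  have : (taylor (-s)).comp (taylor s) = AlgHom.id R _ := by
    ext k
    simp [taylor]
  exact AlgHom.congr_fun this F

noncomputable def multiplicityIdeal (r : σ → ℕ) (s : σ → R) : Ideal (MvPolynomial σ R) :=
  Ideal.span (Set.range fun k => (X k - C (s k)) ^ r k)

theorem mem_multiplicityIdeal_of_coeff_taylor_eq_zero {r : σ → ℕ} {s : σ → R}
    {F : MvPolynomial σ R} (h : ∀ i : σ →₀ ℕ, (∀ k, i k < r k) → coeff i (taylor s F) = 0) :
    F ∈ multiplicityIdeal r s := by
  have hshift : taylor s F ∈ Ideal.span (Set.range fun k => (X k : MvPolynomial σ R) ^ r k) := by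
    have : (Set.range fun k => (X k : MvPolynomial σ R) ^ r k) =
        (fun d => monomial d 1) '' Set.range fun k => Finsupp.single k (r k) := by
      rw [← Set.range_comp]
      simp [Function.comp_def, X_pow_eq_monomial]
    rw [this, mem_ideal_span_monomial_image]
    intro d hd
    by_contra! hnot
    refine mem_support_iff.mp hd (h d fun k => ?_)
    by_contra! hk
    exact hnot _ ⟨k, rfl⟩ (Finsupp.single_le_iff.mpr hk)
  have := Ideal.mem_map_of_mem (taylor (-s)) hshift
  rw [taylor_neg_taylor, Ideal.map_span, ← Set.range_comp] at this
  have hgen : (taylor (-s) ∘ fun k => (X k : MvPolynomial σ R) ^ r k) =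
      fun k => (X k - C (s k)) ^ r k := by
    funext k
    simp [taylor, sub_eq_add_neg]
  rwa [hgen] at this

theorem prod_X_sub_C_pow_mem_multiplicityIdeal {r : σ → ℕ} {s : σ → R} {S : Finset R} {j : σ}
    (hs : s j ∈ S) : (∏ a ∈ S, (X j - C a)) ^ r j ∈ multiplicityIdeal r s :=
  Ideal.mem_of_dvd _ (pow_dvd_pow_of_dvd (Finset.dvd_prod_of_mem _ hs) _)
    (Ideal.subset_span ⟨j, rfl⟩)

theorem X_sub_C_pow_dvd_map_finSuccEquiv {B : Type*} [CommRing B] {n : ℕ} {r : Fin (n + 1) → ℕ}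
    {s : Fin (n + 1) → R} (ψ : MvPolynomial (Fin n) R →+* B)
    (hψ : multiplicityIdeal (Fin.tail r) (Fin.tail s) ≤ RingHom.ker ψ)
    {F : MvPolynomial (Fin (n + 1)) R} (hF : F ∈ multiplicityIdeal r s) :
    (Polynomial.X - Polynomial.C (ψ (C (s 0)))) ^ r 0 ∣ (finSuccEquiv R n F).map ψ := by
  let φ := (Polynomial.mapRingHom ψ).comp (finSuccEquiv R n).toRingHom
  suffices hmap : Ideal.map φ (multiplicityIdeal r s) ≤
      Ideal.span {(Polynomial.X - Polynomial.C (ψ (C (s 0)))) ^ r 0} from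
    Ideal.mem_span_singleton.mp (hmap (Ideal.mem_map_of_mem φ hF))
  have hC (a : R) : finSuccEquiv R n (C a) = Polynomial.C (C a) := by
    simpa [Polynomial.algebraMap_apply, algebraMap_eq] using (finSuccEquiv R n).commutes a
  rw [multiplicityIdeal, Ideal.map_span, Ideal.span_le]
  rintro _ ⟨_, ⟨k, rfl⟩, rfl⟩
  cases k using Fin.cases with
  | zero => exact Ideal.subset_span (by simp [φ, finSuccEquiv_X_zero, hC])
  | succ j =>
    have hφ : φ ((X j.succ - C (s j.succ)) ^ r j.succ) =
        Polynomial.C (ψ ((X j - C (Fin.tail s j)) ^ Fin.tail r j)) := by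
      simp [φ, finSuccEquiv_X_succ, hC, Fin.tail]
    rw [SetLike.mem_coe, hφ, hψ (Ideal.subset_span ⟨j, rfl⟩), map_zero]
    exact zero_mem _

theorem eq_zero_of_forall_mem_multiplicityIdeal {K : Type*} [Field K] {n : ℕ} (r : Fin n → ℕ)
    (S : Fin n → Finset K) (F : MvPolynomial (Fin n) K)
    (hdeg : ∀ d ∈ F.support, ∀ k, d k < r k * #(S k))
    (hF : ∀ s : Fin n → K, (∀ k, s k ∈ S k) → F ∈ multiplicityIdeal r s) : F = 0 := by
  induction n with
  | zero =>
    simpa [multiplicityIdeal, Set.range_eq_empty] using hF finZeroElim finZeroElim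
  | succ n ih =>
    set Q := finSuccEquiv K n F
    suffices hQ : ∀ e, Q.coeff e = 0 by
      simpa [Q] using (Polynomial.ext hQ : Q = 0)
    have hdegQ (e : ℕ) (d : Fin n →₀ ℕ) (hd : d ∈ (Q.coeff e).support) (k : Fin (n + 1)) :
        Finsupp.cons e d k < r k * #(S k) :=
      hdeg _ (by rwa [mem_support_iff, ← finSuccEquiv_coeff_coeff, ← mem_support_iff]) k
    intro e
    refine ih (Fin.tail r) (Fin.tail S) _ (fun d hd k => ?_) (fun s' hs' => ?_)
    · simpa [Fin.tail] using hdegQ e d hd k.succ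
    set π := Ideal.Quotient.mk (multiplicityIdeal (Fin.tail r) s')
    have hmap : Q.map π = 0 := by
      refine Polynomial.eq_zero_of_forall_X_sub_C_pow_dvd (t := S 0) (v := fun a => π (C a))
        (r := r 0) (fun a _ b _ hab => ?_) ?_ fun a ha => ?_
      · simpa using (sub_ne_zero.mpr hab).isUnit.map (π.comp C)
      · rw [Polynomial.degree_lt_iff_coeff_zero]
        intro i hi
        suffices Q.coeff i = 0 by rw [Polynomial.coeff_map, this, map_zero]
        ext d
        by_contra hd
        have := hdegQ i d (mem_support_iff.mpr hd) 0
        rw [Finsupp.cons_zero] at this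
        omega
      · have := X_sub_C_pow_dvd_map_finSuccEquiv (r := r) (s := Fin.cons a s') π
          Ideal.mk_ker.symm.le (hF _ (Fin.cases ha hs'))
        simpa using this
    exact Ideal.Quotient.eq_zero_iff_mem.mp (by simpa using congr_arg (Polynomial.coeff · e) hmap)

theorem exists_eq_sum_mul_prod_X_sub_C_pow_add [IsDomain R] [Fintype σ] (r : σ → ℕ)
    (S : σ → Finset R) (F : MvPolynomial σ R) :
    ∃ (H : σ → MvPolynomial σ R) (G : MvPolynomial σ R),
      F = ∑ j, H j * (∏ a ∈ S j, (X j - C a)) ^ r j + G ∧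
      (∀ j, H j = 0 ∨ (H j).totalDegree + r j * #(S j) ≤ F.totalDegree) ∧
      ∀ d ∈ G.support, ∀ j, d j < r j * #(S j) := by
  let : LinearOrder σ := WellOrderingRel.isWellOrder.linearOrder
  set b : σ → MvPolynomial σ R := fun j => (∏ a ∈ S j, (X j - C a)) ^ r j
  have hmonic (j : σ) : MonomialOrder.degLex.Monic (b j) :=
    (MonomialOrder.Monic.prod fun a _ => MonomialOrder.degLex.monic_X_sub_C j a).pow
  have hdeg (j : σ) : MonomialOrder.degLex.degree (b j) = Finsupp.single j (r j * #(S j)) := by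
    rw [MonomialOrder.degree_pow, MonomialOrder.degree_prod fun a _ =>
      (MonomialOrder.degLex.monic_X_sub_C j a).ne_zero]
    simp [MonomialOrder.degree_X_sub_C]
  obtain ⟨H, G, hFG, hHdeg, hG⟩ := MonomialOrder.degLex.div
    (fun j => (hmonic j).leadingCoeff_eq_one ▸ isUnit_one) F
  refine ⟨H, G, ?_, fun j => ?_, fun d hd j => ?_⟩
  · rw [hFG, Finsupp.linearCombination_apply, Finsupp.sum_fintype _ _ (by simp)]
    simp [b]
  · by_cases hH : H j = 0
    · exact Or.inl hH
    have := degLex_totalDegree_monotone (hHdeg j)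
    rw [totalDegree_mul_of_isDomain (hmonic j).ne_zero hH, ← degree_degLexDegree (f := b j),
      hdeg, Finsupp.degree_single] at this
    exact Or.inr (by omega)
  · have := hG d hd j
    rwa [hdeg, Finsupp.single_le_iff, not_le] at this

end MvPolynomial

theorem decomposition_coordinatewise_multiplicities_general {K : Type*} [Field K] {m : ℕ}
    (r : Fin m → ℕ) (S : Fin m → Finset K)
    (F : MvPolynomial (Fin m) K)
    (hF : ∀ s : Fin m → K, (∀ j, s j ∈ S j) →
      ∀ jj : Fin m →₀ ℕ, (∀ k, jj k < r k) →
        MvPolynomial.eval s (mvHasseDeriv jj F) = 0) :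
    ∃ H : Fin m → MvPolynomial (Fin m) K,
      (∀ j, H j = 0 ∨ (H j).totalDegree + r j * (S j).card ≤ F.totalDegree) ∧
      F = ∑ j, H j * (∏ s ∈ S j, (X j - C s)) ^ (r j) := by
  obtain ⟨H, G, hFG, hH, hG⟩ := exists_eq_sum_mul_prod_X_sub_C_pow_add r S F
  have hG0 : G = 0 := by
    refine eq_zero_of_forall_mem_multiplicityIdeal r S G hG fun s hs => ?_
    have hFs : F ∈ multiplicityIdeal r s :=
      mem_multiplicityIdeal_of_coeff_taylor_eq_zero fun i hi =>
        (coeff_taylor s i F).trans (hF s hs i hi)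
    rw [eq_sub_of_add_eq' hFG.symm]
    exact sub_mem hFs (sum_mem fun j _ =>
      Ideal.mul_mem_left _ _ (prod_X_sub_C_pow_mem_multiplicityIdeal (hs j)))
  exact ⟨H, hH, by rw [hFG, hG0, add_zero]⟩

/-- Decomposition for coordinatewise multiplicities: if all Hasse derivatives of `F` of
multiindex coordinatewise below `r` vanish on the grid, then `F = Σ H_j G_j^{r_j}`
with degree control. -/
theorem decomposition_coordinatewise_multiplicities {K : Type*} [Field K] {m : ℕ}
    (r : Fin m → ℕ) (hr : ∀ j, 0 < r j) (S : Fin m → Finset K)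
    (F : MvPolynomial (Fin m) K)
    (hF : ∀ s : Fin m → K, (∀ j, s j ∈ S j) →
      ∀ jj : Fin m →₀ ℕ, (∀ k, jj k < r k) →
        MvPolynomial.eval s (mvHasseDeriv jj F) = 0) :
    ∃ H : Fin m → MvPolynomial (Fin m) K,
      (∀ j, H j = 0 ∨ (H j).totalDegree + r j * (S j).card ≤ F.totalDegree) ∧
      F = ∑ j, H j * (∏ s ∈ S j, (X j - C s)) ^ (r j) :=
  decomposition_coordinatewise_multiplicities_general r S F hF
end
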